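/- Let D be a southwest diagram and U ∈ KD(D) such that e_r(U) = 0 for all r ≥ 1. Then the weight wt(U) is a partition (its parts weakly decrease), and if U' is any rectified diagram obtained from U by a sequence of rectification operators, then U' is the composition diagram D(wt(U)); in particular U' is independent of the sequence of rectification operators used. -/

import Mathlib

/-!
Definitions for Kohnert diagrams, Kohnert crystals, rectification, Kohnert labelings,
Demazure characters and Kohnert polynomials, following Assaf,
"Demazure crystals for Kohnert polynomials".
-/

namespace Kohnert

/-- A cell `(c, r)` records a column index `c` and a row index `r`. -/
abbrev Cell : Type := ℕ × ℕ

/-- A diagram is a finite set of cells whose coordinates are at least `1`. -/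
def IsDiagram (D : Finset Cell) : Prop := ∀ x ∈ D, 1 ≤ x.1 ∧ 1 ≤ x.2

/-- A diagram is southwest if whenever `(c₁,r₂)` and `(c₂,r₁)` are cells with
`r₁ < r₂` and `c₁ < c₂`, then `(c₁,r₁)` is also a cell. -/
def Southwest (D : Finset Cell) : Prop :=
  ∀ c₁ c₂ r₁ r₂, (c₁, r₂) ∈ D → (c₂, r₁) ∈ D → r₁ < r₂ → c₁ < c₂ → (c₁, r₁) ∈ D

/-- The weight of a diagram: its `r`-th entry is the number of cells in row `r`. -/
noncomputable def wt (T : Finset Cell) : ℕ →₀ ℕ := ∑ x ∈ T, Finsupp.single x.2 1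

/-- A single Kohnert move: the rightmost cell `(c,r)` of some row moves down within its
column to the highest empty position `(c,r')` below it (jumping over occupied positions
as needed), provided such a position with `r' ≥ 1` exists. -/
def KohnertMove (T S : Finset Cell) : Prop :=
  ∃ c r r', (c, r) ∈ T ∧ (∀ c', (c', r) ∈ T → c' ≤ c) ∧
    1 ≤ r' ∧ r' < r ∧ (c, r') ∉ T ∧ (∀ s, r' < s → s < r → (c, s) ∈ T) ∧
    S = insert (c, r') (T.erase (c, r))

/-- `KD D` is the set of diagrams obtainable from `D` by a (possibly empty) sequence of
Kohnert moves. -/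
def KD (D : Finset Cell) : Set (Finset Cell) := {T | Relation.ReflTransGen KohnertMove D T}

/-! ### Row pairing and the crystal raising and lowering operators -/

/-- Columns of the cells of row `i+1` having no cell of row `i` below them. -/
def freeUpCols (T : Finset Cell) (i : ℕ) : Finset ℕ :=
  (T.filter fun x => x.2 = i + 1 ∧ (x.1, i) ∉ T).image Prod.fst

/-- Columns of the cells of row `i` having no cell of row `i+1` above them. -/
def freeDownCols (T : Finset Cell) (i : ℕ) : Finset ℕ :=
  (T.filter fun x => x.2 = i ∧ (x.1, i + 1) ∉ T).image Prod.fst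

/-- The cell `(c, i+1)` of `T` is not `i`-paired: cells of rows `i` and `i+1` in a common
column are `i`-paired with each other, and the remaining cells are matched by the
iterative rule pairing a cell of row `i` with a cell of row `i+1` strictly to its right
whenever all cells of the two rows strictly between them are already `i`-paired.  This is
the standard bracketing characterization of the resulting matching. -/
def UnpairedUp (T : Finset Cell) (i c : ℕ) : Prop :=
  (c, i + 1) ∈ T ∧ (c, i) ∉ T ∧
    ((freeDownCols T i).filter (fun d => d < c)).card <
      ((freeUpCols T i).filter (fun d => d ≤ c)).card

/-- The cell `(c, i)` of `T` is not `i`-paired. -/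
def UnpairedDown (T : Finset Cell) (i c : ℕ) : Prop :=
  (c, i) ∈ T ∧ (c, i + 1) ∉ T ∧
    ((freeUpCols T i).filter (fun d => c < d)).card <
      ((freeDownCols T i).filter (fun d => c ≤ d)).card

/-- A cell of `T` lying in row `i` or `i+1` is `i`-paired. -/
def RowPaired (T : Finset Cell) (i : ℕ) (x : Cell) : Prop :=
  x ∈ T ∧ ((x.2 = i + 1 ∧ ¬ UnpairedUp T i x.1) ∨ (x.2 = i ∧ ¬ UnpairedDown T i x.1))

open Classical in
/-- The raising operator `e_i`: move the rightmost non-`i`-paired cell of row `i+1`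
down to row `i`, staying within its column; if every cell of row `i+1` is `i`-paired,
the result is `none` (that is, `e_i(T) = 0`). -/
noncomputable def raise (i : ℕ) (T : Finset Cell) : Option (Finset Cell) :=
  if ∃ c, UnpairedUp T i c then
    some (insert (sSup {c | UnpairedUp T i c}, i) (T.erase (sSup {c | UnpairedUp T i c}, i + 1)))
  else none

open Classical in
/-- The lowering operator `f_i` relative to `D`: move the leftmost non-`i`-paired cell of
row `i` up to row `i+1`, staying within its column, provided the result lies in `KD D`;
otherwise the result is `none` (that is, `f_i(T) = 0`). -/
noncomputable def lower (D : Finset Cell) (i : ℕ) (T : Finset Cell) : Option (Finset Cell) :=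
  if ∃ c, UnpairedDown T i c then
    if insert (sInf {c | UnpairedDown T i c}, i + 1)
        (T.erase (sInf {c | UnpairedDown T i c}, i)) ∈ KD D then
      some (insert (sInf {c | UnpairedDown T i c}, i + 1)
        (T.erase (sInf {c | UnpairedDown T i c}, i)))
    else none
  else none

/-- One raising-operator step. -/
def RaiseStep (T S : Finset Cell) : Prop := ∃ i, 1 ≤ i ∧ raise i T = some S

/-- A highest weight diagram: every raising operator vanishes on it. -/
def HighestWeight (U : Finset Cell) : Prop := ∀ r, 1 ≤ r → raise r U = none

/-- The equivalence relation generated by `T ∼ e_i(T)` whenever `e_i(T) ≠ 0`. -/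
def CrystalEquiv : Finset Cell → Finset Cell → Prop := Relation.EqvGen RaiseStep

/-- `K` is a connected component of the Kohnert crystal on `KD D`. -/
def IsComponent (D : Finset Cell) (K : Set (Finset Cell)) : Prop :=
  ∃ T₀ ∈ KD D, K = {S | S ∈ KD D ∧ CrystalEquiv S T₀}

/-! ### Column pairing and rectification -/

/-- Rows of the cells of column `c` having no cell of column `c+1` in their row. -/
def freeLeftRows (T : Finset Cell) (c : ℕ) : Finset ℕ :=
  (T.filter fun x => x.1 = c ∧ (c + 1, x.2) ∉ T).image Prod.snd

/-- Rows of the cells of column `c+1` having no cell of column `c` in their row. -/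
def freeRightRows (T : Finset Cell) (c : ℕ) : Finset ℕ :=
  (T.filter fun x => x.1 = c + 1 ∧ (c, x.2) ∉ T).image Prod.snd

/-- The cell `(c+1, r)` of `T` is not column `c`-paired: cells of columns `c` and `c+1`
in a common row are paired with each other, and the remaining cells are matched by the
iterative rule pairing a cell of column `c+1` with a cell of column `c` strictly above it
whenever all cells of the two columns strictly between them are already paired. -/
def ColUnpaired (T : Finset Cell) (c r : ℕ) : Prop :=
  (c + 1, r) ∈ T ∧ (c, r) ∉ T ∧
    ((freeLeftRows T c).filter (fun s => r < s)).card <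
      ((freeRightRows T c).filter (fun s => r ≤ s)).card

open Classical in
/-- The rectification operator `R_c`: move the lowest non-column-`c`-paired cell of
column `c+1` left to column `c`, staying within its row; if every cell of column `c+1`
is column `c`-paired, do nothing. -/
noncomputable def rectify (c : ℕ) (T : Finset Cell) : Finset Cell :=
  if ∃ r, ColUnpaired T c r then
    insert (c, sInf {r | ColUnpaired T c r}) (T.erase (c + 1, sInf {r | ColUnpaired T c r}))
  else T

/-- `R_c^*`: apply `R_c` until it acts trivially (at most `T.card` nontrivial
applications are possible, since each moves a distinct cell of column `c+1`). -/
noncomputable def rectifyStar (c : ℕ) (T : Finset Cell) : Finset Cell := (rectify c)^[T.card] T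

/-- A diagram is rectified: for all `c, r ≥ 1`,
`#{s ≥ r : (c,s) ∈ T} ≥ #{s ≥ r : (c+1,s) ∈ T}`. -/
def Rectified (T : Finset Cell) : Prop :=
  ∀ c r, 1 ≤ c → 1 ≤ r →
    (T.filter fun x => x.1 = c + 1 ∧ r ≤ x.2).card ≤ (T.filter fun x => x.1 = c ∧ r ≤ x.2).card

/-- One rectification-operator step. -/
def RectStep (T S : Finset Cell) : Prop := ∃ c, 1 ≤ c ∧ S = rectify c T

open Classical in
/-- The rectification of a diagram: the (unique) rectified diagram obtained by applying
rectification operators, in any order, until all act trivially. -/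
noncomputable def rect (T : Finset Cell) : Finset Cell :=
  if h : ∃ S, Relation.ReflTransGen RectStep T S ∧ Rectified S then h.choose else T

/-- `T` is the composition diagram `{(c,r) : 1 ≤ c ≤ a r}` of the weak composition `a`. -/
def IsCompDiagramOf (T : Finset Cell) (a : ℕ → ℕ) : Prop :=
  ∀ c r, (c, r) ∈ T ↔ 1 ≤ c ∧ 1 ≤ r ∧ c ≤ a r

/-- `T` is a composition diagram. -/
def IsCompositionDiagram (T : Finset Cell) : Prop := ∃ a : ℕ → ℕ, IsCompDiagramOf T a

/-! ### Labelings of diagrams -/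

/-- A labeling assigns an integer label to each cell of a diagram. -/
abbrev Labeling := Cell → ℕ

/-- A labeling is flagged if every cell in row `r` has label at least `r`. -/
def Flagged (T : Finset Cell) (L : Labeling) : Prop := ∀ x ∈ T, x.2 ≤ L x

/-- The diagram `𝔻(L)` recording the labels: a cell `(c, r)` whenever column `c` of `T`
contains a cell labeled `r`. -/
def labelDiagram (T : Finset Cell) (L : Labeling) : Finset Cell := T.image fun x => (x.1, L x)

/-- The set of rows of the cells of column `c`. -/
def colRows (T : Finset Cell) (c : ℕ) : Finset ℕ := (T.filter fun x => x.1 = c).image Prod.snd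

/-- The element of `s` maximizing `f` (taking the largest such element). -/
noncomputable def argmaxIn (f : ℕ → ℕ) (s : Finset ℕ) : Option ℕ :=
  if h : s.Nonempty then
    some ((s.filter fun a => f a = s.sup' h f).max' (by
      obtain ⟨b, hb, he⟩ := Finset.exists_mem_eq_sup' h f
      exact ⟨b, Finset.mem_filter.2 ⟨hb, he.symm⟩⟩))
  else none

/-- Greedy label `c`-pairing: process the rows of column `c+1` in the given order; the
cell in row `r` is paired with the still-available cell of column `c` lying weakly above
it whose label is largest among those with label at most `L (c+1, r)`, if one exists. -/
noncomputable def labelPairList (L : Labeling) (c : ℕ) :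
    List ℕ → Finset ℕ → List (ℕ × Option ℕ)
  | [], _ => []
  | r :: rs, avail =>
    match argmaxIn (fun s => L (c, s)) (avail.filter fun s => r ≤ s ∧ L (c, s) ≤ L (c + 1, r)) with
    | none => (r, none) :: labelPairList L c rs avail
    | some s => (r, some s) :: labelPairList L c rs (avail.erase s)

/-- The label `c`-pairing of `T` with respect to `L`, processing the cells of column
`c+1` from top to bottom. -/
noncomputable def labelPairing (L : Labeling) (T : Finset Cell) (c : ℕ) : List (ℕ × Option ℕ) :=
  labelPairList L c (((colRows T (c + 1)).sort (· ≤ ·)).reverse) (colRows T c)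

/-- The row of the cell of column `c` label `c`-paired with the cell `(c+1, r)`, if any. -/
noncomputable def labelPartner (L : Labeling) (T : Finset Cell) (c r : ℕ) : Option ℕ :=
  ((labelPairing L T c).lookup r).join

open Classical in
/-- The swapping pass in the construction of the rectified labeling: for each label
`c`-unpaired cell `x` of column `c+1` (processed from highest to lowest), if there are
label `c`-paired cells `y` (in column `c`) and `z` (in column `c+1`) with `z` above `x`
and `L(y) ≤ L'(x) < L'(z)`, swap the labels of `x` and such `z` with `L'(z)` maximal. -/
noncomputable def swapPass (L0 : Labeling) (T : Finset Cell) (c : ℕ) :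
    List ℕ → Labeling → Labeling
  | [], L' => L'
  | r :: rs, L' =>
    match argmaxIn (fun s => L' (c + 1, s)) ((colRows T (c + 1)).filter fun s =>
        r < s ∧ ∃ t ∈ colRows T c, labelPartner L0 T c s = some t ∧
          L0 (c, t) ≤ L' (c + 1, r) ∧ L' (c + 1, r) < L' (c + 1, s)) with
    | none => swapPass L0 T c rs L'
    | some z => swapPass L0 T c rs
        (Function.update (Function.update L' (c + 1, r) (L' (c + 1, z))) (c + 1, z) (L' (c + 1, r)))

/-- The label `c`-unpaired rows of column `c+1`, from highest to lowest. -/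
noncomputable def unpairedDesc (L : Labeling) (T : Finset Cell) (c : ℕ) : List ℕ :=
  (((colRows T (c + 1)).filter fun r => labelPartner L T c r = none).sort (· ≤ ·)).reverse

open Classical in
/-- The relabeling `L'` of `T` at column `c`: perform the swapping pass on the label
`c`-unpaired cells of column `c+1`, then give every label `c`-paired cell of column
`c+1` the label of its partner in column `c`. -/
noncomputable def relabel (L : Labeling) (T : Finset Cell) (c : ℕ) : Labeling :=
  fun x =>
    if x.1 = c + 1 ∧ x ∈ T then
      match labelPartner L T c x.2 with
      | some t => L (c, t)
      | none => swapPass L T c (unpairedDesc L T c) L x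
    else L x

open Classical in
/-- The rectified labeling `R_c^*(L)` of `R_c^*(T)`: cells moved from column `c+1` to
column `c` under rectification carry their relabeled labels with them. -/
noncomputable def rectifyStarLabel (L : Labeling) (T : Finset Cell) (c : ℕ) : Labeling :=
  fun x =>
    if x.1 = c ∧ x ∉ T ∧ (c + 1, x.2) ∈ T ∧ x ∈ rectifyStar c T then
      relabel L T c (c + 1, x.2)
    else relabel L T c x

/-- Labeled rectification at column `c`. -/
noncomputable def rectStarLab (c : ℕ) (p : Finset Cell × Labeling) : Finset Cell × Labeling :=
  (rectifyStar c p.1, rectifyStarLabel p.2 p.1 c)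

/-- Apply labeled rectification at each of the given columns in order. -/
noncomputable def sweepLab (cols : List ℕ) (p : Finset Cell × Labeling) :
    Finset Cell × Labeling :=
  cols.foldl (fun q c => rectStarLab c q) p

/-- The fully rectified labeled diagram, rectifying columns from the rightmost down to
column `lo` and iterating until stable. -/
noncomputable def rectLabFrom (lo : ℕ) (p : Finset Cell × Labeling) : Finset Cell × Labeling :=
  (fun q => sweepLab ((List.range' lo (p.1.sup Prod.fst + 1 - lo)).reverse) q)^[∑ x ∈ p.1, x.1] p

/-- The fully rectified labeled diagram `(rect T, rect L)`. -/
noncomputable def rectLab (p : Finset Cell × Labeling) : Finset Cell × Labeling := rectLabFrom 1 p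

open Classical in
/-- Greedy assignment of the given labels (in increasing order) to the available rows of
column `c`: each label goes to the lowest available row lying weakly above the cell with
that label in column `c+1` of the rectified right part `rp`, if such a cell exists; the
result is `none` when no such assignment is possible. -/
noncomputable def greedyAssign (c : ℕ) (rp : Finset Cell × Labeling) :
    List ℕ → Finset ℕ → Option (List (ℕ × ℕ))
  | [], _ => some []
  | lab :: labs, avail =>
    if h : (avail.filter fun row =>
        ∀ s ∈ colRows rp.1 (c + 1), rp.2 (c + 1, s) = lab → s ≤ row).Nonempty then
      (greedyAssign c rp labs (avail.erase ((avail.filter fun row =>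
          ∀ s ∈ colRows rp.1 (c + 1), rp.2 (c + 1, s) = lab → s ≤ row).min' h))).map
        (fun l => (lab, (avail.filter fun row =>
          ∀ s ∈ colRows rp.1 (c + 1), rp.2 (c + 1, s) = lab → s ≤ row).min' h) :: l)
    else none

open Classical in
/-- Label the rightmost `k` columns `m, m-1, …, m-k+1` of `T` with respect to `D`:
having labeled the columns strictly right of column `c`, rectify that part of `T`
together with its labels (with column `c+1` as the leftmost available column) and then
greedily assign the labels `{r : (c,r) ∈ D}` to the cells of column `c`. -/
noncomputable def labelColsAux (D T : Finset Cell) (m : ℕ) : ℕ → Option Labeling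
  | 0 => some fun _ => 0
  | k + 1 =>
    match labelColsAux D T m k with
    | none => none
    | some L =>
      match greedyAssign (m - k) (rectLabFrom (m - k + 1) (T.filter fun x => m - k < x.1, L))
          ((colRows D (m - k)).sort (· ≤ ·)) (colRows T (m - k)) with
      | none => none
      | some asg =>
        some fun x =>
          if x.1 = m - k then ((asg.find? fun p => p.2 == x.2).map Prod.fst).getD (L x)
          else L x

/-- The Kohnert labeling `L_D` of `T` with respect to `D`, or `none` when it is not
well defined. -/
noncomputable def kohnertLabel (D T : Finset Cell) : Option Labeling :=
  labelColsAux D T (T.sup Prod.fst) (T.sup Prod.fst)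

/-- `(T, L)` is a Kohnert tableau of content `a`: (i) for each `i ≥ 1` there is exactly
one cell labeled `i` in each of columns `1, …, a i` and in no other column; (ii) every
cell in row `r` has label at least `r`; (iii) cells with a common label occupy weakly
descending rows from left to right; (iv) if labels `i < j` occur in one column with `i`
above `j`, there is a cell labeled `i` in the next column strictly above the cell
labeled `j`. -/
def IsKohnertTableau (T : Finset Cell) (L : Labeling) (a : ℕ → ℕ) : Prop :=
  (∀ x ∈ T, 1 ≤ L x) ∧
  (∀ i c, 1 ≤ i → 1 ≤ c → ((∃ x ∈ T, x.1 = c ∧ L x = i) ↔ c ≤ a i)) ∧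
  (∀ x ∈ T, ∀ y ∈ T, x.1 = y.1 → L x = L y → x = y) ∧
  (∀ x ∈ T, x.2 ≤ L x) ∧
  (∀ x ∈ T, ∀ y ∈ T, L x = L y → x.1 < y.1 → y.2 ≤ x.2) ∧
  (∀ x ∈ T, ∀ y ∈ T, x.1 = y.1 → L x < L y → y.2 < x.2 →
    ∃ z ∈ T, z.1 = x.1 + 1 ∧ L z = L x ∧ y.2 < z.2)

/-- `Y ∈ KD D` is Yamanouchi with respect to `D`: the rectification of the Kohnert
labeling `L_D(Y)` is the super-standard labeling of a composition diagram, i.e.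
`rect Y` is a composition diagram and each of its cells in row `r` carries label `r`. -/
def Yamanouchi (D Y : Finset Cell) : Prop :=
  Y ∈ KD D ∧ ∃ L, kohnertLabel D Y = some L ∧
    IsCompositionDiagram (rectLab (Y, L)).1 ∧
    ∀ x ∈ (rectLab (Y, L)).1, (rectLab (Y, L)).2 x = x.2

/-! ### Demazure characters and Kohnert polynomials -/

open MvPolynomial Classical in
/-- The isobaric divided difference operator
`π_i f = ∂_i (x_i f) = (x_i f − s_i · (x_i f)) / (x_i − x_{i+1})`, defined as the unique
polynomial `g` with `g * (x_i − x_{i+1}) = x_i f − s_i · (x_i f)`. -/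
noncomputable def piOp (i : ℕ) (f : MvPolynomial ℕ ℤ) : MvPolynomial ℕ ℤ :=
  if h : ∃ g, g * (X i - X (i + 1)) =
      X i * f - rename (Equiv.swap i (i + 1)) (X i * f) then h.choose else 0

/-- `IsDemazure a f` holds exactly when `f` is the Demazure character `κ_a`:
`κ_λ = x^λ` for `λ` a partition, and `κ_{s_i · a} = π_i κ_a` whenever `a i > a (i+1)`.
Iterating the latter from the sorted partition `λ` of `a` along a chain of strict
descents realizes `κ_a = π_{ρ_ℓ} ⋯ π_{ρ_1} (x_1^{λ_1} ⋯ x_n^{λ_n})` for precisely the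
reduced words `(ρ_ℓ, …, ρ_1)` of the minimal-length permutation `w` with `w · λ = a`. -/
inductive IsDemazure : (ℕ →₀ ℕ) → MvPolynomial ℕ ℤ → Prop
  | base (l : ℕ →₀ ℕ) (h0 : l 0 = 0) (hl : ∀ i, 1 ≤ i → l (i + 1) ≤ l i) :
      IsDemazure l (MvPolynomial.monomial l 1)
  | step (a : ℕ →₀ ℕ) (f : MvPolynomial ℕ ℤ) (i : ℕ) (hi : 1 ≤ i) (hlt : a (i + 1) < a i)
      (h : IsDemazure a f) :
      IsDemazure (a.equivMapDomain (Equiv.swap i (i + 1))) (piOp i f)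

open Classical in
/-- `KD D` as a finite set (every Kohnert diagram of `D` lies in the box below `D`). -/
noncomputable def KDfin (D : Finset Cell) : Finset (Finset Cell) :=
  ((D.biUnion fun x => {x.1} ×ˢ Finset.Icc 1 x.2).powerset).filter (· ∈ KD D)

/-- The Kohnert polynomial `K_D = Σ_{T ∈ KD(D)} x^{wt T}`. -/
noncomputable def kohnertPoly (D : Finset Cell) : MvPolynomial ℕ ℤ :=
  ∑ T ∈ KDfin D, MvPolynomial.monomial (wt T) 1

open Classical in
/-- The set of Yamanouchi diagrams for `D`, as a finite set. -/
noncomputable def YamFin (D : Finset Cell) : Finset (Finset Cell) :=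
  (KDfin D).filter (Yamanouchi D)

/-- The set of column indices of the cells of row `r` of `D`. -/
def rowSet (D : Finset Cell) (r : ℕ) : Finset ℕ := (D.filter fun x => x.2 = r).image Prod.fst

/-- A diagram is vexillary if its rows are totally ordered by inclusion. -/
def Vexillary (D : Finset Cell) : Prop :=
  ∀ r s, rowSet D r ⊆ rowSet D s ∨ rowSet D s ⊆ rowSet D r

/-- The diagram `s_c · D` obtained by exchanging the contents of columns `c` and `c+1`. -/
def swapCols (c : ℕ) (D : Finset Cell) : Finset Cell :=
  D.image fun x => if x.1 = c then (c + 1, x.2) else if x.1 = c + 1 then (c, x.2) else x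

/-!
Reading columns from left to right, the bracketing of the `i`-pairing leaves no cell of
row `i + 1` unpaired exactly when every prefix of columns meets row `i` at least as often
as row `i + 1`; comparing full rows shows that the weight is a partition. This prefix
dominance survives rectification: moving the cell `(c + 1, R)` to `(c, R)` only enlarges
prefixes of row `R`, and the one prefix that could then overtake row `R - 1` is excluded
because `(c + 1, R)` is the lowest column-unpaired cell. Finally, in a rectified diagram
with dominant rows, working down from the top, rectifiedness makes a row left-justified
once the rows above it are nested, and dominance then forces the row below to contain it,
so every row is left-justified.
-/

open Finset

lemma isDiagram_of_mem_KD {D U : Finset Cell} (hD : IsDiagram D) (hU : U ∈ KD D) :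
    IsDiagram U := by
  induction hU with
  | refl => exact hD
  | tail _ h ih =>
    obtain ⟨c, r, r', hcr, -, hr', -, -, -, rfl⟩ := h
    intro x hx
    rcases mem_insert.1 hx with rfl | hx
    · exact ⟨(ih _ hcr).1, hr'⟩
    · exact ih x (mem_of_mem_erase hx)

lemma card_filter_le_le_of_bracketing {α : Type*} [LinearOrder α] {A B : Finset α}
    (h : ∀ c ∈ A \ B, #((A \ B).filter (· ≤ c)) ≤ #((B \ A).filter (· < c))) (d : α) :
    #(A.filter (· ≤ d)) ≤ #(B.filter (· ≤ d)) := by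
  have hsdiff : #((A \ B).filter (· ≤ d)) ≤ #((B \ A).filter (· ≤ d)) := by
    rcases ((A \ B).filter (· ≤ d)).eq_empty_or_nonempty with hempty | hne
    · simp [hempty]
    obtain ⟨hc, hcd⟩ := mem_filter.1 (max'_mem _ hne)
    calc #((A \ B).filter (· ≤ d))
        ≤ #((A \ B).filter (· ≤ max' _ hne)) :=
          card_le_card fun x hx => mem_filter.2 ⟨(mem_filter.1 hx).1, le_max' _ _ hx⟩
      _ ≤ #((B \ A).filter (· < max' _ hne)) := h _ hc
      _ ≤ #((B \ A).filter (· ≤ d)) := card_le_card fun x hx =>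
            mem_filter.2 ⟨(mem_filter.1 hx).1, (mem_filter.1 hx).2.le.trans hcd⟩
  have hsplit (X Y : Finset α) :
      #((X \ Y).filter (· ≤ d)) + #((X ∩ Y).filter (· ≤ d)) = #(X.filter (· ≤ d)) := by
    rw [← card_union_of_disjoint (disjoint_filter_filter (disjoint_sdiff_inter X Y)),
      ← filter_union, sdiff_union_inter]
  have hA := hsplit A B
  have hB := hsplit B A
  rw [inter_comm] at hB
  omega

lemma card_le_card_of_forall_card_filter_le {A B : Finset ℕ}
    (h : ∀ d, #(A.filter (· ≤ d)) ≤ #(B.filter (· ≤ d))) : #A ≤ #B := by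
  calc #A = #(A.filter (· ≤ A.sup id)) :=
        congrArg card (filter_true_of_mem fun a ha => le_sup (f := id) ha).symm
    _ ≤ #(B.filter (· ≤ A.sup id)) := h _
    _ ≤ #B := card_filter_le _ _

lemma card_filter_le_succ (S : Finset ℕ) (d : ℕ) :
    #(S.filter (· ≤ d + 1)) = #(S.filter (· ≤ d)) + if d + 1 ∈ S then 1 else 0 := by
  have hfilter : S.filter (· ≤ d + 1) = S.filter (· ≤ d) ∪ S.filter (· = d + 1) := by
    ext a
    simp only [mem_filter, mem_union, ← and_or_left, Nat.le_succ_iff]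
  have hdisj : Disjoint (S.filter (· ≤ d)) (S.filter (· = d + 1)) :=
    disjoint_filter.2 fun a _ h h' => by omega
  rw [hfilter, card_union_of_disjoint hdisj,
    filter_eq' S (d + 1), apply_ite card, card_singleton, card_empty]

lemma card_filter_le_insert_erase {S : Finset ℕ} {c : ℕ} (hc : c ∉ S) (hc1 : c + 1 ∈ S)
    (d : ℕ) : #((insert c (S.erase (c + 1))).filter (· ≤ d)) =
      #(S.filter (· ≤ d)) + if d = c then 1 else 0 := by
  have hcS : c ∉ (S.filter (· ≤ d)).erase (c + 1) := by simp [hc]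
  rw [filter_insert, filter_erase]
  by_cases hcd : c ≤ d
  · rw [if_pos hcd, card_insert_of_notMem hcS]
    rcases eq_or_lt_of_le hcd with rfl | hlt
    · rw [erase_eq_of_notMem (by simp), if_pos rfl]
    · have hmem : c + 1 ∈ S.filter (· ≤ d) := mem_filter.2 ⟨hc1, hlt⟩
      rw [card_erase_of_mem hmem, if_neg hlt.ne']
      have := card_pos.2 ⟨_, hmem⟩
      omega
  · rw [if_neg hcd, erase_eq_of_notMem fun h => hcd (by have := (mem_filter.1 h).2; omega),
      if_neg (by omega), add_zero]

lemma mem_rowSet {T : Finset Cell} {r a : ℕ} : a ∈ rowSet T r ↔ (a, r) ∈ T := by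
  simp [rowSet]

lemma wt_eq_card_rowSet (T : Finset Cell) (r : ℕ) : wt T r = #(rowSet T r) := by
  rw [wt, Finsupp.finsetSum_apply, rowSet, card_image_of_injOn, card_filter]
  · exact sum_congr rfl fun x _ => by rw [Finsupp.single_apply]
  · intro x hx y hy hxy
    exact Prod.ext hxy ((mem_filter.1 hx).2.trans (mem_filter.1 hy).2.symm)

lemma freeUpCols_eq (T : Finset Cell) (i : ℕ) :
    freeUpCols T i = rowSet T (i + 1) \ rowSet T i := by
  ext a
  simp [freeUpCols, mem_rowSet]

lemma freeDownCols_eq (T : Finset Cell) (i : ℕ) :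
    freeDownCols T i = rowSet T i \ rowSet T (i + 1) := by
  ext a
  simp [freeDownCols, mem_rowSet]

def RowsDominate (T : Finset Cell) : Prop :=
  ∀ i, 1 ≤ i → ∀ d, #((rowSet T (i + 1)).filter (· ≤ d)) ≤ #((rowSet T i).filter (· ≤ d))

lemma HighestWeight.rowsDominate {T : Finset Cell} (hT : HighestWeight T) : RowsDominate T := by
  intro i hi
  have hpaired : ∀ c, ¬UnpairedUp T i c := by simpa [raise] using hT i hi
  apply card_filter_le_le_of_bracketing
  intro c hc
  specialize hpaired c
  simp only [UnpairedUp, freeUpCols_eq, freeDownCols_eq, not_and, not_lt] at hpaired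
  rw [mem_sdiff, mem_rowSet, mem_rowSet] at hc
  exact hpaired hc.1 hc.2

lemma RowsDominate.wt_succ_le {T : Finset Cell} (hT : RowsDominate T) {i : ℕ} (hi : 1 ≤ i) :
    wt T (i + 1) ≤ wt T i := by
  rw [wt_eq_card_rowSet, wt_eq_card_rowSet]
  exact card_le_card_of_forall_card_filter_le (hT i hi)

lemma rectify_eq_self_or (c : ℕ) (T : Finset Cell) :
    rectify c T = T ∨ ∃ R, ColUnpaired T c R ∧ (∀ r < R, ¬ColUnpaired T c r) ∧
      rectify c T = insert (c, R) (T.erase (c + 1, R)) := by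
  unfold rectify
  split_ifs with h
  · exact .inr ⟨_, Nat.sInf_mem h, fun r hr => Nat.notMem_of_lt_sInf hr, rfl⟩
  · exact .inl rfl

lemma mem_colRows {T : Finset Cell} {c s : ℕ} : s ∈ colRows T c ↔ (c, s) ∈ T := by
  simp [colRows]

lemma freeLeftRows_eq (T : Finset Cell) (c : ℕ) :
    freeLeftRows T c = colRows T c \ colRows T (c + 1) := by
  ext s
  simp [freeLeftRows, mem_colRows]

lemma freeRightRows_eq (T : Finset Cell) (c : ℕ) :
    freeRightRows T c = colRows T (c + 1) \ colRows T c := by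
  ext s
  simp [freeRightRows, mem_colRows]

lemma ColUnpaired.of_succ {T : Finset Cell} {c r : ℕ} (h : ColUnpaired T c (r + 1))
    (h1 : (c + 1, r) ∈ T) (h2 : (c, r) ∉ T) : ColUnpaired T c r := by
  obtain ⟨-, hnot, hlt⟩ := h
  refine ⟨h1, h2, ?_⟩
  rw [freeLeftRows_eq, freeRightRows_eq] at hlt ⊢
  have hleft : (colRows T c \ colRows T (c + 1)).filter (r < ·) ⊆
      (colRows T c \ colRows T (c + 1)).filter (r + 1 < ·) := by
    intro s hs
    rw [mem_filter, mem_sdiff, mem_colRows] at hs ⊢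
    obtain ⟨⟨hs, hs'⟩, hrs⟩ := hs
    refine ⟨⟨hs, hs'⟩, lt_of_le_of_ne hrs ?_⟩
    rintro rfl
    exact hnot hs
  have hright : (colRows T (c + 1) \ colRows T c).filter (r + 1 ≤ ·) ⊂
      (colRows T (c + 1) \ colRows T c).filter (r ≤ ·) := by
    rw [ssubset_iff_of_subset (monotone_filter_right _ fun s hs => by omega)]
    exact ⟨r, by simp [mem_colRows, h1, h2]⟩
  exact (card_le_card hleft).trans_lt (hlt.trans (card_lt_card hright))

lemma rowSet_insert_erase_of_ne (T : Finset Cell) {c R r : ℕ} (hr : r ≠ R) :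
    rowSet (insert (c, R) (T.erase (c + 1, R))) r = rowSet T r := by
  ext a
  simp [mem_rowSet, hr]

lemma rowSet_insert_erase_self (T : Finset Cell) (c R : ℕ) :
    rowSet (insert (c, R) (T.erase (c + 1, R))) R = insert c ((rowSet T R).erase (c + 1)) := by
  ext a
  simp [mem_rowSet]

lemma IsDiagram.rectify {T : Finset Cell} (hT : IsDiagram T) {c : ℕ} (hc : 1 ≤ c) :
    IsDiagram (rectify c T) := by
  rcases rectify_eq_self_or c T with h | ⟨R, ⟨hR, -⟩, -, h⟩
  · rwa [h]
  rw [h]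
  intro x hx
  rcases mem_insert.1 hx with rfl | hx
  · exact ⟨hc, (hT _ hR).2⟩
  · exact hT x (mem_of_mem_erase hx)

lemma wt_rectify (c : ℕ) (T : Finset Cell) : wt (rectify c T) = wt T := by
  rcases rectify_eq_self_or c T with h | ⟨R, ⟨hR, hR', -⟩, -, h⟩
  · rw [h]
  rw [h, wt, wt, sum_insert fun hx => hR' (mem_of_mem_erase hx), ← add_sum_erase T _ hR]

lemma RowsDominate.rectify {T : Finset Cell} (hT : RowsDominate T) {c : ℕ} (hc : 1 ≤ c) :
    RowsDominate (rectify c T) := by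
  rcases rectify_eq_self_or c T with h | ⟨R, hR, hmin, h⟩
  · rwa [h]
  rw [h]
  have hR1 : c + 1 ∈ rowSet T R := mem_rowSet.2 hR.1
  have hR2 : c ∉ rowSet T R := fun h => hR.2.1 (mem_rowSet.1 h)
  intro i hi d
  by_cases hiR : i + 1 = R
  · subst hiR
    rw [rowSet_insert_erase_self, rowSet_insert_erase_of_ne _ (by omega),
      card_filter_le_insert_erase hR2 hR1]
    split_ifs with hdc
    · subst d
      by_cases hci : (c, i) ∈ T
      · obtain ⟨e, rfl⟩ : ∃ e, c = e + 1 := ⟨c - 1, by omega⟩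
        have := hT i hi e
        rw [card_filter_le_succ, card_filter_le_succ, if_neg hR2, if_pos (mem_rowSet.2 hci)]
        omega
      · -- minimality of `R` rules out the cell `(c + 1, R - 1)`
        have hci' : c + 1 ∉ rowSet T i := fun h' =>
          hmin i (by omega) (hR.of_succ (mem_rowSet.1 h') hci)
        have := hT i hi (c + 1)
        rw [card_filter_le_succ, card_filter_le_succ, if_pos hR1, if_neg hci'] at this
        omega
    · exact hT i hi d
  · by_cases hiR' : i = R
    · subst hiR'
      rw [rowSet_insert_erase_self, rowSet_insert_erase_of_ne _ hiR,
        card_filter_le_insert_erase hR2 hR1]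
      exact (hT i hi d).trans (Nat.le_add_right _ _)
    · rw [rowSet_insert_erase_of_ne _ hiR, rowSet_insert_erase_of_ne _ hiR']
      exact hT i hi d

lemma isDiagram_rowsDominate_wt_of_reflTransGen_rectStep {T T' : Finset Cell}
    (h : Relation.ReflTransGen RectStep T T') (hT : IsDiagram T) (hdom : RowsDominate T) :
    IsDiagram T' ∧ RowsDominate T' ∧ wt T' = wt T := by
  induction h with
  | refl => exact ⟨hT, hdom, rfl⟩
  | tail _ hstep ih =>
    obtain ⟨c, hc, rfl⟩ := hstep
    obtain ⟨hdiag, hdom', hwt⟩ := ih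
    exact ⟨hdiag.rectify hc, hdom'.rectify hc, (wt_rectify c _).trans hwt⟩

lemma Rectified.exists_mem_of_mem_succ {T : Finset Cell} (hT : Rectified T) {c r : ℕ}
    (hc : 1 ≤ c) (hr : 1 ≤ r) (h : (c + 1, r) ∈ T) : ∃ s, r ≤ s ∧ (c, s) ∈ T := by
  have hpos : 0 < #(T.filter fun x => x.1 = c ∧ r ≤ x.2) :=
    (card_pos.2 ⟨_, mem_filter.2 ⟨h, rfl, le_rfl⟩⟩).trans_le (hT c r hc hr)
  obtain ⟨⟨c', s⟩, hx⟩ := card_pos.1 hpos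
  simp only [mem_filter] at hx
  obtain ⟨hx, rfl, hrs⟩ := hx
  exact ⟨s, hrs, hx⟩

lemma mem_of_mem_of_nested {T : Finset Cell} {r : ℕ}
    (hnest : ∀ j, r ≤ j → ∀ e, (e, j + 1) ∈ T → (e, j) ∈ T) {e s : ℕ} (hs : r ≤ s)
    (h : (e, s) ∈ T) : (e, r) ∈ T := by
  induction s, hs using Nat.le_induction with
  | base => exact h
  | succ s hs ih => exact ih (hnest s hs e h)

lemma Rectified.mem_of_le_of_nested {T : Finset Cell} (hT : Rectified T) {r : ℕ} (hr : 1 ≤ r)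
    (hnest : ∀ j, r ≤ j → ∀ e, (e, j + 1) ∈ T → (e, j) ∈ T) {d e : ℕ} (he : 1 ≤ e)
    (hed : e ≤ d) (h : (d, r) ∈ T) : (e, r) ∈ T := by
  induction d, hed using Nat.le_induction with
  | base => exact h
  | succ d hed ih =>
    obtain ⟨s, hrs, hs⟩ := hT.exists_mem_of_mem_succ (he.trans hed) hr h
    exact ih (mem_of_mem_of_nested hnest hrs hs)

lemma Rectified.mem_of_mem_succ_of_nested_above {T : Finset Cell} (hdiag : IsDiagram T)
    (hrect : Rectified T) (hdom : RowsDominate T) {i : ℕ} (hi : 1 ≤ i)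
    (habove : ∀ j, i + 1 ≤ j → ∀ e, (e, j + 1) ∈ T → (e, j) ∈ T) {d : ℕ}
    (h : (d, i + 1) ∈ T) : (d, i) ∈ T := by
  by_contra hdi
  have hupper : Icc 1 d ⊆ (rowSet T (i + 1)).filter (· ≤ d) := fun e he => by
    rw [mem_Icc] at he
    exact mem_filter.2
      ⟨mem_rowSet.2 (hrect.mem_of_le_of_nested (by omega) habove he.1 he.2 h), he.2⟩
  have hlower : (rowSet T i).filter (· ≤ d) ⊆ Icc 1 (d - 1) := fun e he => by
    rw [mem_filter, mem_rowSet] at he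
    have hed : e ≠ d := by
      rintro rfl
      exact hdi he.1
    rw [mem_Icc]
    have := (hdiag _ he.1).1
    omega
  have := (card_le_card hupper).trans ((hdom i hi d).trans (card_le_card hlower))
  have := (hdiag _ h).1
  simp only [Nat.card_Icc] at *
  omega

lemma Rectified.nested {T : Finset Cell} (hdiag : IsDiagram T) (hrect : Rectified T)
    (hdom : RowsDominate T) {i : ℕ} (hi : 1 ≤ i) :
    ∀ j, i ≤ j → ∀ e, (e, j + 1) ∈ T → (e, j) ∈ T := by
  obtain ⟨M, hM⟩ : ∃ M, ∀ x ∈ T, x.2 ≤ M := ⟨T.sup Prod.snd, fun x hx => le_sup hx⟩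
  refine Nat.decreasingInduction' (P := fun k => ∀ j, k ≤ j → ∀ e, (e, j + 1) ∈ T → (e, j) ∈ T)
    (n := i + M) ?_ (Nat.le_add_right i M) ?_
  · intro k _ hik habove j hkj e h
    rcases hkj.eq_or_lt with rfl | hkj
    · exact hrect.mem_of_mem_succ_of_nested_above hdiag hdom (hi.trans hik) habove h
    · exact habove j hkj e h
  · intro j hj e h
    have := hM _ h
    simp only at this
    omega

lemma mem_iff_one_le_and_le_card {S : Finset ℕ} (hpos : ∀ a ∈ S, 1 ≤ a)
    (hdown : ∀ a ∈ S, ∀ b, 1 ≤ b → b ≤ a → b ∈ S) {a : ℕ} : a ∈ S ↔ 1 ≤ a ∧ a ≤ #S := by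
  constructor
  · intro ha
    have := card_le_card fun b hb => hdown a ha b (mem_Icc.1 hb).1 (mem_Icc.1 hb).2
    rw [Nat.card_Icc] at this
    exact ⟨hpos a ha, by omega⟩
  · rintro ⟨ha, haS⟩
    by_contra hnot
    have hsub : S ⊆ Icc 1 (a - 1) := fun b hb => by
      have hba : b < a := lt_of_not_ge fun hab => hnot (hdown b hb a ha hab)
      exact mem_Icc.2 ⟨hpos b hb, by omega⟩
    have := card_le_card hsub
    rw [Nat.card_Icc] at this
    omega

lemma Rectified.isCompDiagramOf_wt {T : Finset Cell} (hrect : Rectified T) (hdiag : IsDiagram T)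
    (hdom : RowsDominate T) : IsCompDiagramOf T (fun r => wt T r) := by
  intro c r
  rcases Nat.eq_zero_or_pos r with rfl | hr
  · exact iff_of_false (fun h => by simpa using (hdiag _ h).2) (by omega)
  beta_reduce
  rw [wt_eq_card_rowSet, ← mem_rowSet, mem_iff_one_le_and_le_card]
  · exact ⟨fun ⟨hc, hcr⟩ => ⟨hc, hr, hcr⟩, fun ⟨hc, _, hcr⟩ => ⟨hc, hcr⟩⟩
  · exact fun a ha => (hdiag _ (mem_rowSet.1 ha)).1
  · exact fun a ha b hb hba => mem_rowSet.2 <|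
      hrect.mem_of_le_of_nested hr (hrect.nested hdiag hdom hr) hb hba (mem_rowSet.1 ha)

theorem highestWeight_rect_general (D U : Finset Cell) (hD : IsDiagram D)
    (hU : U ∈ KD D) (hhw : ∀ r, 1 ≤ r → raise r U = none) :
    (∀ i, 1 ≤ i → wt U (i + 1) ≤ wt U i) ∧
    (∀ U', Relation.ReflTransGen RectStep U U' → Rectified U' →
      IsCompDiagramOf U' (fun r => wt U r)) := by
  have hdom : RowsDominate U := HighestWeight.rowsDominate hhw
  refine ⟨fun i hi => hdom.wt_succ_le hi, fun U' hsteps hrect => ?_⟩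
  obtain ⟨hdiag', hdom', hwt⟩ :=
    isDiagram_rowsDominate_wt_of_reflTransGen_rectStep hsteps (isDiagram_of_mem_KD hD hU) hdom
  rw [← hwt]
  exact hrect.isCompDiagramOf_wt hdiag' hdom'

/-- **Lemma (highest weights rectify).** For `D` southwest and `U ∈ KD(D)` with
`e_r(U) = 0` for all `r ≥ 1`, the weight of `U` is a partition and any rectified diagram
obtained from `U` by rectification operators is the composition diagram of `wt U`;
in particular it does not depend on the sequence used. -/
theorem highestWeight_rect (D U : Finset Cell) (hD : IsDiagram D) (hsw : Southwest D)
    (hU : U ∈ KD D) (hhw : ∀ r, 1 ≤ r → raise r U = none) :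
    (∀ i, 1 ≤ i → wt U (i + 1) ≤ wt U i) ∧
    (∀ U', Relation.ReflTransGen RectStep U U' → Rectified U' →
      IsCompDiagramOf U' (fun r => wt U r)) :=
  highestWeight_rect_general D U hD hU hhw

end Kohnert
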